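/- arXiv:1512.00912 — 4 statements merged into one kernel-verified Lean document; each statement's English description precedes it below -/
import Mathlib

section
/- Let G be a σ-compact locally compact abelian group, χ a continuous character of G, and (A_n) a van Hove sequence in G. Then the averages (1/θ_G(A_n)) ∫_{A_n} χ(x) dθ_G(x) converge to 1 if χ is the trivial character, and to 0 otherwise. -/
/-!
If `χ g ≠ 1`, translating by `g` multiplies `∫_A χ` by `χ g`, while moving the domain of
integration from `A` to `g + A` changes the integral by at most the measure of the symmetric
difference, which lies in the van Hove boundary `∂^{g} A`. Hence
`‖χ g - 1‖ * ‖∫_A χ‖ ≤ θ (∂^{g} A) = o(θ A)`.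
A compact set need not be measurable when `G` is not Hausdorff; its closure is, and carries the
same restricted Haar measure.
-/

open MeasureTheory Filter Classical
open scoped Pointwise ENNReal
open scoped Classical

/-- The (generalised) van Hove boundary `∂^U W`. -/
def vhBoundary {G : Type*} [AddGroup G] [TopologicalSpace G] (U W : Set G) : Set G :=
  ((U + closure W) ∩ closure Wᶜ) ∪ ((U + closure Wᶜ) ∩ closure W)

/-- A van Hove sequence of compact sets of positive finite Haar measure. -/
def IsVanHove {G : Type*} [AddGroup G] [TopologicalSpace G] [MeasurableSpace G]
    (θ : Measure G) (A : ℕ → Set G) : Prop :=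
  (∀ n, IsCompact (A n)) ∧ (∀ n, 0 < θ (A n)) ∧ (∀ n, θ (A n) < ⊤) ∧
    ∀ K : Set G, IsCompact K →
      Tendsto (fun n => θ (vhBoundary K (A n)) / θ (A n)) atTop (nhds 0)

theorem IsCompact.restrict_closure {X : Type*} [TopologicalSpace X] [R1Space X]
    [MeasurableSpace X] [BorelSpace X] {K : Set X} (hK : IsCompact K) (μ : Measure X) :
    μ.restrict (closure K) = μ.restrict K := by
  ext t ht
  rw [Measure.restrict_apply ht, Measure.restrict_apply ht]
  refine le_antisymm ?_ (measure_mono (Set.inter_subset_inter_right _ subset_closure))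
  set M := toMeasurable μ (t ∩ K)
  -- Borel sets are unions of inseparability classes, so the Borel superset `M ∪ tᶜ` of `K`
  -- contains `closure K`.
  have hK_sub : closure K ⊆ M ∪ tᶜ :=
    hK.closure_subset_measurableSet ((measurableSet_toMeasurable μ _).union ht.compl)
      fun x hx => by
        by_cases hxt : x ∈ t
        exacts [.inl (subset_toMeasurable μ _ ⟨hxt, hx⟩), .inr hxt]
  calc μ (t ∩ closure K) ≤ μ M :=
        measure_mono fun x ⟨hxt, hxK⟩ => (hK_sub hxK).resolve_right (not_not_intro hxt)
    _ = μ (t ∩ K) := measure_toMeasurable _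

theorem norm_setIntegral_sub_setIntegral_le {X E : Type*} [MeasurableSpace X]
    [NormedAddCommGroup E] [NormedSpace ℝ E] {μ : Measure X} {f : X → E} {C : ℝ} {s t : Set X}
    (hf : AEStronglyMeasurable f μ) (hC : ∀ x, ‖f x‖ ≤ C) (hs : MeasurableSet s)
    (ht : MeasurableSet t) (hμs : μ s ≠ ∞) (hμt : μ t ≠ ∞) :
    ‖∫ x in s, f x ∂μ - ∫ x in t, f x ∂μ‖ ≤ C * μ.real (symmDiff s t) := by
  have hfs := Measure.integrableOn_of_bounded hμs hf (.of_forall hC)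
  have hft := Measure.integrableOn_of_bounded hμt hf (.of_forall hC)
  rw [← integral_inter_add_sdiff ht hfs, ← integral_inter_add_sdiff hs hft, Set.inter_comm t s,
    add_sub_add_left_eq_sub, measureReal_symmDiff_eq hs ht hμs hμt, mul_add]
  refine (norm_sub_le _ _).trans (add_le_add ?_ ?_) <;>
    exact norm_setIntegral_le_of_norm_le_const
      ((measure_mono Set.sdiff_subset).trans_lt (lt_top_iff_ne_top.2 ‹_›)) fun x _ => hC x

section Character

variable {G : Type*} [AddGroup G] [MeasurableSpace G] [MeasurableAdd G] {μ : Measure G}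
  [μ.IsAddLeftInvariant] {χ : G → ℂ}

theorem setIntegral_vadd_of_map_add (hχ : ∀ x y, χ (x + y) = χ x * χ y) (g : G) (s : Set G) :
    ∫ x in g +ᵥ s, χ x ∂μ = χ g * ∫ x in s, χ x ∂μ :=
  calc ∫ x in g +ᵥ s, χ x ∂μ = ∫ x in s, χ (g + x) ∂μ :=
        (measurePreserving_add_left μ g).setIntegral_image_emb (measurableEmbedding_addLeft g) χ s
    _ = χ g * ∫ x in s, χ x ∂μ := by simp_rw [hχ, integral_const_mul]

theorem norm_sub_one_mul_norm_setIntegral_le (hχ : ∀ x y, χ (x + y) = χ x * χ y)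
    (hχm : AEStronglyMeasurable χ μ) (hχ1 : ∀ x, ‖χ x‖ ≤ 1) (g : G) {s : Set G}
    (hs : MeasurableSet s) (hμs : μ s ≠ ∞) :
    ‖χ g - 1‖ * ‖∫ x in s, χ x ∂μ‖ ≤ μ.real (symmDiff (g +ᵥ s) s) := by
  have h := norm_setIntegral_sub_setIntegral_le hχm hχ1 (hs.const_vadd g) hs
    (by rwa [measure_vadd]) hμs
  rwa [setIntegral_vadd_of_map_add hχ, ← sub_one_mul, norm_mul, one_mul] at h

end Character

theorem symmDiff_vadd_closure_subset_vhBoundary {G : Type*} [AddGroup G] [TopologicalSpace G]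
    (g : G) (W : Set G) : symmDiff (g +ᵥ closure W) (closure W) ⊆ vhBoundary {g} W := by
  rintro x (⟨⟨y, hy, rfl⟩, hxW⟩ | ⟨hxW, hxg⟩)
  · exact .inl ⟨⟨g, rfl, y, hy, rfl⟩, subset_closure fun h => hxW (subset_closure h)⟩
  · have hy : -g + x ∉ closure W := fun h => hxg ⟨_, h, add_neg_cancel_left g x⟩
    exact .inr ⟨⟨g, rfl, -g + x, subset_closure fun h => hy (subset_closure h),
      add_neg_cancel_left g x⟩, hxW⟩

theorem measure_vhBoundary_lt_top {G : Type*} [AddGroup G] [TopologicalSpace G]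
    [IsTopologicalAddGroup G] [MeasurableSpace G] (μ : Measure G) [IsFiniteMeasureOnCompacts μ]
    {U W : Set G} (hU : IsCompact U) (hW : IsCompact W) : μ (vhBoundary U W) < ∞ := by
  refine (measure_mono ?_).trans_lt ((hU.add hW.closure).union hW.closure).measure_lt_top
  rintro x (⟨hx, -⟩ | ⟨-, hx⟩)
  · exact .inl hx
  · exact .inr hx

theorem norm_sub_one_mul_norm_setIntegral_le_vhBoundary {G : Type*} [AddGroup G]
    [TopologicalSpace G] [IsTopologicalAddGroup G] [MeasurableSpace G] [BorelSpace G]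
    {μ : Measure G} [μ.IsAddLeftInvariant] [IsFiniteMeasureOnCompacts μ] {χ : G → ℂ}
    (hχ : ∀ x y, χ (x + y) = χ x * χ y) (hχc : Continuous χ) (hχ1 : ∀ x, ‖χ x‖ ≤ 1) (g : G)
    {A : Set G} (hA : IsCompact A) :
    ‖χ g - 1‖ * ‖∫ x in A, χ x ∂μ‖ ≤ μ.real (vhBoundary {g} A) := by
  rw [← hA.restrict_closure μ]
  exact (norm_sub_one_mul_norm_setIntegral_le hχ hχc.aestronglyMeasurable hχ1 g
      isClosed_closure.measurableSet hA.closure.measure_lt_top.ne).trans <|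
    measureReal_mono (symmDiff_vadd_closure_subset_vhBoundary g A)
      (measure_vhBoundary_lt_top μ isCompact_singleton hA).ne

theorem character_average_vanHove_general
    {G : Type*} [AddCommGroup G] [TopologicalSpace G] [IsTopologicalAddGroup G]
    [MeasurableSpace G] [BorelSpace G]
    (θ : Measure G) [θ.IsAddHaarMeasure]
    (χ : G → ℂ) (hχc : Continuous χ) (hχm : ∀ x y, χ (x + y) = χ x * χ y)
    (hχu : ∀ x, ‖χ x‖ = 1)
    (A : ℕ → Set G) (hA : IsVanHove θ A) :
    Tendsto (fun n => ((θ (A n)).toReal)⁻¹ • ∫ x in A n, χ x ∂θ) atTop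
      (nhds (if ∀ x, χ x = 1 then 1 else 0)) := by
  obtain ⟨hAc, hApos, hAfin, hAvh⟩ := hA
  split_ifs with htriv
  · refine tendsto_const_nhds.congr fun n => ?_
    have hA_real : 0 < θ.real (A n) := ENNReal.toReal_pos (hApos n).ne' (hAfin n).ne
    simp only [htriv, setIntegral_const, smul_smul, ← measureReal_def]
    rw [inv_mul_cancel₀ hA_real.ne', one_smul]
  obtain ⟨g, hg⟩ := not_forall.1 htriv
  have hc : 0 < ‖χ g - 1‖ := norm_pos_iff.2 (sub_ne_zero.2 hg)
  have hbound (n : ℕ) : ‖((θ (A n)).toReal)⁻¹ • ∫ x in A n, χ x ∂θ‖ ≤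
      ‖χ g - 1‖⁻¹ * (θ (vhBoundary {g} (A n)) / θ (A n)).toReal :=
    calc ‖((θ (A n)).toReal)⁻¹ • ∫ x in A n, χ x ∂θ‖
        = (θ.real (A n))⁻¹ * ‖∫ x in A n, χ x ∂θ‖ := by
          rw [norm_smul, norm_inv, Real.norm_of_nonneg ENNReal.toReal_nonneg, measureReal_def]
      _ ≤ (θ.real (A n))⁻¹ * (‖χ g - 1‖⁻¹ * θ.real (vhBoundary {g} (A n))) := by
          gcongr
          exact (le_inv_mul_iff₀ hc).2 <| norm_sub_one_mul_norm_setIntegral_le_vhBoundary hχm hχc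
            (fun x => (hχu x).le) g (hAc n)
      _ = ‖χ g - 1‖⁻¹ * (θ (vhBoundary {g} (A n)) / θ (A n)).toReal := by
          rw [ENNReal.toReal_div, measureReal_def, measureReal_def]
          ring
  refine squeeze_zero_norm hbound ?_
  simpa using ((ENNReal.tendsto_toReal ENNReal.zero_ne_top).comp
    (hAvh {g} isCompact_singleton)).const_mul ‖χ g - 1‖⁻¹

/-- Averages of a continuous character over a van Hove sequence converge
to `1` for the trivial character and to `0` otherwise. -/
theorem character_average_vanHove
    {G : Type*} [AddCommGroup G] [TopologicalSpace G] [IsTopologicalAddGroup G]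
    [LocallyCompactSpace G] [SigmaCompactSpace G] [MeasurableSpace G] [BorelSpace G]
    (θ : Measure G) [θ.IsAddHaarMeasure]
    (χ : G → ℂ) (hχc : Continuous χ) (hχm : ∀ x y, χ (x + y) = χ x * χ y)
    (hχu : ∀ x, ‖χ x‖ = 1)
    (A : ℕ → Set G) (hA : IsVanHove θ A) :
    Tendsto (fun n => ((θ (A n)).toReal)⁻¹ • ∫ x in A n, χ x ∂θ) atTop
      (nhds (if ∀ x, χ x = 1 then 1 else 0)) :=
  character_average_vanHove_general θ χ hχc hχm hχu A hA
end

section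
/- Let G, H be locally compact abelian groups, ℒ a lattice in G×H with dense projection π^H(ℒ) in H, and let W ⊆ H have non-empty interior. Then the model set ⋀(W) = π^G(ℒ ∩ (G×W)) is relatively dense in G, i.e., there exists a compact K ⊆ G with ⋀(W) + K = G. -/
open scoped Pointwise

open Set

/-! Cover `G × H` modulo `L` by the open sets `(g + V) × (-U)`, where `V` is the interior of a
compact neighbourhood of `0` in `G` and `U` is the interior of the window: density of `π^H(L)` makes
them cover, and compactness of `(G × H) ⧸ L` extracts finitely many `g ∈ t`. Writing `(x, 0)` as
`(g + v, -u) + ℓ` puts `ℓ = (x - g - v, u)` in `L`, so `x ∈ ⋀(U) + (t + K)`. -/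

lemma IsOpen.add_eq_univ_of_dense {H : Type*} [AddGroup H] [TopologicalSpace H]
    [IsTopologicalAddGroup H] {U S : Set H} (hU : IsOpen U) (hne : U.Nonempty) (hS : Dense S) :
    U + S = univ := by
  rw [← hU.add_closure, hS.closure_eq, add_univ hne]

lemma AddSubgroup.exists_finset_biUnion_add_eq_univ {X ι : Type*} [AddGroup X] [TopologicalSpace X]
    [IsTopologicalAddGroup X] (L : AddSubgroup X) [CompactSpace (X ⧸ L)] {O : ι → Set X}
    (hO : ∀ i, IsOpen (O i)) (hcover : (⋃ i, O i) + (L : Set X) = univ) :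
    ∃ t : Finset ι, (⋃ i ∈ t, O i) + (L : Set X) = univ := by
  have himage : ∀ s : Set X,
      s + (L : Set X) = univ ↔ (QuotientAddGroup.mk '' s : Set (X ⧸ L)) = univ := fun s ↦ by
      rw [← QuotientAddGroup.preimage_image_mk_eq_add, ← preimage_univ,
        (QuotientAddGroup.mk_surjective (s := L)).preimage_injective.eq_iff]
  rw [himage, image_iUnion] at hcover
  obtain ⟨t, ht⟩ := isCompact_univ.elim_finite_subcover _
    (fun i ↦ QuotientAddGroup.isOpenMap_coe _ (hO i)) hcover.ge
  exact ⟨t, by rw [himage, image_iUnion₂]; exact univ_subset_iff.1 ht⟩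

def modelSet {G H : Type*} [AddCommGroup G] [AddCommGroup H] (L : AddSubgroup (G × H))
    (W : Set H) : Set G :=
  {g | ∃ y ∈ W, (g, y) ∈ L}

lemma modelSet_mono {G H : Type*} [AddCommGroup G] [AddCommGroup H] (L : AddSubgroup (G × H))
    {W W' : Set H} (h : W ⊆ W') : modelSet L W ⊆ modelSet L W' :=
  fun _ ⟨y, hy, hyL⟩ ↦ ⟨y, h hy, hyL⟩

lemma exists_isCompact_modelSet_add_eq_univ_of_isOpen {G H : Type*}
    [AddCommGroup G] [TopologicalSpace G] [IsTopologicalAddGroup G] [LocallyCompactSpace G]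
    [AddCommGroup H] [TopologicalSpace H] [IsTopologicalAddGroup H]
    (L : AddSubgroup (G × H)) [CompactSpace ((G × H) ⧸ L)]
    (hdense : Dense (Prod.snd '' (L : Set (G × H))))
    {U : Set H} (hU : IsOpen U) (hne : U.Nonempty) :
    ∃ K : Set G, IsCompact K ∧ modelSet L U + K = univ := by
  obtain ⟨K, hK, hK0⟩ := exists_compact_mem_nhds (0 : G)
  have hcoverH : -U + Prod.snd '' (L : Set (G × H)) = univ :=
    hU.neg.add_eq_univ_of_dense hne.neg hdense
  have hcover : (⋃ g : G, (g +ᵥ interior K) ×ˢ (-U)) + (L : Set (G × H)) = univ := by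
    refine eq_univ_of_forall fun ⟨x, h⟩ ↦ ?_
    obtain ⟨u, hu, _, ⟨ℓ, hℓ, rfl⟩, rfl⟩ := hcoverH ▸ mem_univ h
    refine ⟨(x - ℓ.1, u), mem_iUnion.2 ⟨x - ℓ.1, ?_, hu⟩, ℓ, hℓ, Prod.ext (sub_add_cancel x ℓ.1) rfl⟩
    exact ⟨0, mem_interior_iff_mem_nhds.2 hK0, add_zero _⟩
  obtain ⟨t, ht⟩ := L.exists_finset_biUnion_add_eq_univ
    (fun g ↦ (isOpen_interior.vadd g).prod hU.neg) hcover
  refine ⟨(t : Set G) + K, t.finite_toSet.isCompact.add hK, eq_univ_of_forall fun x ↦ ?_⟩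
  obtain ⟨⟨_, u⟩, hgvu, ℓ, hℓ, hx⟩ := ht ▸ mem_univ (x, (0 : H))
  obtain ⟨g, hg, ⟨v, hv, rfl⟩, hu⟩ := by simpa only [mem_iUnion, mem_prod] using hgvu
  obtain ⟨hx₁, hx₂⟩ := Prod.ext_iff.1 hx
  have hℓ₂ : ℓ.2 = -u := eq_neg_of_add_eq_zero_right hx₂
  refine ⟨ℓ.1, ⟨ℓ.2, by simpa [hℓ₂] using hu, hℓ⟩, g + v, add_mem_add hg (interior_subset hv), ?_⟩
  simpa [add_comm ℓ.1] using hx₁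

theorem modelSet_relativelyDense_general
    {G H : Type*}
    [AddCommGroup G] [TopologicalSpace G] [IsTopologicalAddGroup G] [LocallyCompactSpace G]
    [AddCommGroup H] [TopologicalSpace H] [IsTopologicalAddGroup H]
    (L : AddSubgroup (G × H)) [CompactSpace ((G × H) ⧸ L)]
    (hdense : Dense (Prod.snd '' (L : Set (G × H))))
    (W : Set H) (hW : (interior W).Nonempty) :
    ∃ K : Set G, IsCompact K ∧ {g : G | ∃ y ∈ W, (g, y) ∈ L} + K = Set.univ := by
  obtain ⟨K, hK, hcover⟩ :=
    exists_isCompact_modelSet_add_eq_univ_of_isOpen L hdense isOpen_interior hW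
  refine ⟨K, hK, univ_subset_iff.1 ?_⟩
  rw [← hcover]
  exact add_subset_add_right (modelSet_mono L interior_subset)

/-- If the lattice `L ⊆ G × H` projects densely to `H` and the window
`W ⊆ H` has non-empty interior, then the model set `⋀(W) = π^G(L ∩ (G × W))` is
relatively dense in `G`: there is a compact `K` with `⋀(W) + K = G`. -/
theorem modelSet_relativelyDense
    {G H : Type*}
    [AddCommGroup G] [TopologicalSpace G] [IsTopologicalAddGroup G] [LocallyCompactSpace G]
    [AddCommGroup H] [TopologicalSpace H] [IsTopologicalAddGroup H] [LocallyCompactSpace H]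
    (L : AddSubgroup (G × H)) [DiscreteTopology L] [CompactSpace ((G × H) ⧸ L)]
    (hdense : Dense (Prod.snd '' (L : Set (G × H))))
    (W : Set H) (hW : (interior W).Nonempty) :
    ∃ K : Set G, IsCompact K ∧ {g : G | ∃ y ∈ W, (g, y) ∈ L} + K = Set.univ :=
  modelSet_relativelyDense_general L hdense W hW
end

section
/- Let (G,H,ℒ) be a cut-and-project scheme with G σ-compact satisfying the density formula, and let h : H → ℂ be Riemann integrable. Then ω_h has the unique autocorrelation γ = dens(ℒ) · ω_{h*h̃}, i.e., for every van Hove sequence (A_n), the measures (1/θ_G(A_n)) (ω_h|_{A_n}) * (ω_h|_{A_n})~ converge vaguely to dens(ℒ) · ∑_{(z,z')∈ℒ} (h*h̃)(z') δ_z. -/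
open MeasureTheory Filter
open scoped ENNReal Pointwise

/-- A real function is Riemann integrable (w.r.t. the Haar measure `θ`) if it can be
squeezed between continuous compactly supported functions of arbitrarily close
integrals. -/
def RiemannIntegrableR {H : Type*} [TopologicalSpace H] [MeasurableSpace H]
    (θ : Measure H) (u : H → ℝ) : Prop :=
  ∀ ε > (0 : ℝ), ∃ g₁ g₂ : H → ℝ,
    Continuous g₁ ∧ Continuous g₂ ∧ HasCompactSupport g₁ ∧ HasCompactSupport g₂ ∧
      (∀ y, g₁ y ≤ u y ∧ u y ≤ g₂ y) ∧ ∫ y, (g₂ y - g₁ y) ∂θ ≤ ε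

/-- A complex function is Riemann integrable if its real and imaginary parts are. -/
def RiemannIntegrable {H : Type*} [TopologicalSpace H] [MeasurableSpace H]
    (θ : Measure H) (h : H → ℂ) : Prop :=
  RiemannIntegrableR θ (fun y => (h y).re) ∧ RiemannIntegrableR θ (fun y => (h y).im)

open Set Function Topology
open scoped ComplexConjugate

/-!
Writing `ω = ω_h|_{A_n}`, the autocorrelation pairs `(q, r)` are regrouped by their difference
`p = q - r`, so the measure is `∑_p c_n(p) δ_{p_G}` with `c_n(p) = ∑_q ω(q) conj ω(q - p)`.
Against a test function `f` only the finitely many lattice points with `p_G ∈ supp f` and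
`p_H ∈ supp h - supp h` matter, so it suffices to show `c_n(p) / θ_G(A_n) → dens(ℒ) (h * h̃)(p_H)`
for each `p`. Now `c_n(p)` agrees with `ω_g(A_n)` for `g = h · conj h(· - p_H)`, which the density
formula handles, except at lattice points over `A_n \ (p_G + A_n)`. These lie over a van Hove
boundary of `A_n`; since small open translates of lattice points are disjoint, their number is
at most a constant times the Haar measure of that boundary, which is `o(θ_G(A_n))`.
-/

namespace RiemannIntegrableR

variable {H : Type*} [TopologicalSpace H] [MeasurableSpace H] {θ : Measure H} {u v : H → ℝ}

theorem hasCompactSupport (hu : RiemannIntegrableR θ u) : HasCompactSupport u := by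
  obtain ⟨g₁, g₂, -, -, hs₁, hs₂, hsq, -⟩ := hu 1 one_pos
  refine .intro' (hs₁.union hs₂) ((isClosed_tsupport g₁).union (isClosed_tsupport g₂))
    fun y hy => ?_
  rw [mem_union, not_or] at hy
  have h₁ := image_eq_zero_of_notMem_tsupport hy.1
  have h₂ := image_eq_zero_of_notMem_tsupport hy.2
  linarith [hsq y]

theorem exists_abs_le (hu : RiemannIntegrableR θ u) : ∃ B, 0 ≤ B ∧ ∀ y, |u y| ≤ B := by
  obtain ⟨g₁, g₂, hc₁, hc₂, hs₁, hs₂, hsq, -⟩ := hu 1 one_pos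
  obtain ⟨C₁, hC₁⟩ := hs₁.exists_bound_of_continuous hc₁
  obtain ⟨C₂, hC₂⟩ := hs₂.exists_bound_of_continuous hc₂
  refine ⟨|C₁| + |C₂|, by positivity, fun y => abs_le.2 ⟨?_, ?_⟩⟩
  · linarith [neg_le_of_abs_le (hC₁ y), le_abs_self C₁, abs_nonneg C₂, (hsq y).1]
  · linarith [le_of_abs_le (hC₂ y), le_abs_self C₂, abs_nonneg C₁, (hsq y).2]

theorem neg (hu : RiemannIntegrableR θ u) : RiemannIntegrableR θ (fun y => -u y) := by
  intro ε hε
  obtain ⟨g₁, g₂, hc₁, hc₂, hs₁, hs₂, hsq, hi⟩ := hu ε hε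
  refine ⟨fun y => -g₂ y, fun y => -g₁ y, hc₂.neg, hc₁.neg, hs₂.neg, hs₁.neg,
    fun y => ⟨neg_le_neg (hsq y).2, neg_le_neg (hsq y).1⟩, ?_⟩
  simpa only [neg_sub_neg] using hi

theorem comp_sub_right {H : Type*} [AddGroup H] [TopologicalSpace H] [IsTopologicalAddGroup H]
    [MeasurableSpace H] [MeasurableAdd H] {θ : Measure H} [θ.IsAddRightInvariant] {u : H → ℝ}
    (hu : RiemannIntegrableR θ u) (z : H) : RiemannIntegrableR θ (fun y => u (y - z)) := by
  intro ε hε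
  obtain ⟨g₁, g₂, hc₁, hc₂, hs₁, hs₂, hsq, hi⟩ := hu ε hε
  refine ⟨fun y => g₁ (y - z), fun y => g₂ (y - z), hc₁.comp (continuous_sub_right z),
    hc₂.comp (continuous_sub_right z), hs₁.comp_homeomorph (Homeomorph.subRight z),
    hs₂.comp_homeomorph (Homeomorph.subRight z), fun y => hsq (y - z), ?_⟩
  rwa [integral_sub_right_eq_self (fun y => g₂ y - g₁ y) z]

variable [OpensMeasurableSpace H] [IsFiniteMeasureOnCompacts θ]

theorem add (hu : RiemannIntegrableR θ u) (hv : RiemannIntegrableR θ v) :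
    RiemannIntegrableR θ (fun y => u y + v y) := by
  intro ε hε
  obtain ⟨g₁, g₂, hc₁, hc₂, hs₁, hs₂, hsq, hi⟩ := hu (ε / 2) (by linarith)
  obtain ⟨k₁, k₂, hd₁, hd₂, ht₁, ht₂, hsq', hi'⟩ := hv (ε / 2) (by linarith)
  refine ⟨fun y => g₁ y + k₁ y, fun y => g₂ y + k₂ y, hc₁.add hd₁, hc₂.add hd₂,
    hs₁.add ht₁, hs₂.add ht₂,
    fun y => ⟨add_le_add (hsq y).1 (hsq' y).1, add_le_add (hsq y).2 (hsq' y).2⟩, ?_⟩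
  have hg : Integrable (fun y => g₂ y - g₁ y) θ :=
    (hc₂.integrable_of_hasCompactSupport hs₂).sub (hc₁.integrable_of_hasCompactSupport hs₁)
  have hk : Integrable (fun y => k₂ y - k₁ y) θ :=
    (hd₂.integrable_of_hasCompactSupport ht₂).sub (hd₁.integrable_of_hasCompactSupport ht₁)
  calc ∫ y, (g₂ y + k₂ y - (g₁ y + k₁ y)) ∂θ
      = ∫ y, (g₂ y - g₁ y) ∂θ + ∫ y, (k₂ y - k₁ y) ∂θ := by
        rw [← integral_add hg hk]; congr 1 with y; ring
    _ ≤ ε := by linarith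

theorem posPart (hu : RiemannIntegrableR θ u) : RiemannIntegrableR θ (fun y => max (u y) 0) := by
  intro ε hε
  obtain ⟨g₁, g₂, hc₁, hc₂, hs₁, hs₂, hsq, hi⟩ := hu ε hε
  have hc : ∀ {g : H → ℝ}, Continuous g → Continuous fun y => max (g y) 0 :=
    fun hg => hg.max continuous_const
  have hs : ∀ {g : H → ℝ}, HasCompactSupport g → HasCompactSupport fun y => max (g y) 0 :=
    fun hg => hg.comp_left (g := fun x => max x 0) (max_self 0)
  refine ⟨fun y => max (g₁ y) 0, fun y => max (g₂ y) 0, hc hc₁, hc hc₂, hs hs₁, hs hs₂,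
    fun y => ⟨max_le_max_right 0 (hsq y).1, max_le_max_right 0 (hsq y).2⟩, ?_⟩
  refine le_trans (integral_mono ?_ ?_ fun y => ?_) hi
  · exact ((hc hc₂).integrable_of_hasCompactSupport (hs hs₂)).sub
      ((hc hc₁).integrable_of_hasCompactSupport (hs hs₁))
  · exact (hc₂.integrable_of_hasCompactSupport hs₂).sub (hc₁.integrable_of_hasCompactSupport hs₁)
  · have := (hsq y).1.trans (hsq y).2
    simp only
    rcases le_total (g₁ y) 0 with h₁ | h₁ <;> rcases le_total (g₂ y) 0 with h₂ | h₂ <;>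
      simp only [max_eq_left, max_eq_right, h₁, h₂] <;> linarith

theorem exists_sandwich_of_mem_Icc (hu : RiemannIntegrableR θ u) {B : ℝ} (hB : 0 ≤ B)
    (huB : ∀ y, u y ∈ Icc 0 B) {ε : ℝ} (hε : 0 < ε) :
    ∃ g₁ g₂ : H → ℝ, Continuous g₁ ∧ Continuous g₂ ∧ HasCompactSupport g₁ ∧
      HasCompactSupport g₂ ∧ (∀ y, 0 ≤ g₁ y ∧ g₁ y ≤ u y ∧ u y ≤ g₂ y ∧ g₂ y ≤ B) ∧
      ∫ y, (g₂ y - g₁ y) ∂θ ≤ ε := by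
  obtain ⟨g₁, g₂, hc₁, hc₂, hs₁, hs₂, hsq, hi⟩ := hu ε hε
  have hc₁' : Continuous fun y => max (g₁ y) 0 := hc₁.max continuous_const
  have hc₂' : Continuous fun y => min (g₂ y) B := hc₂.min continuous_const
  have hs₁' : HasCompactSupport fun y => max (g₁ y) 0 :=
    hs₁.comp_left (g := fun x => max x 0) (max_self 0)
  have hs₂' : HasCompactSupport fun y => min (g₂ y) B :=
    hs₂.comp_left (g := fun x => min x B) (min_eq_left hB)
  refine ⟨_, _, hc₁', hc₂', hs₁', hs₂', fun y => ⟨le_max_right _ _,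
    max_le (hsq y).1 (huB y).1, le_min (hsq y).2 (huB y).2, min_le_right _ _⟩, ?_⟩
  refine le_trans (integral_mono ?_ ?_ fun y => ?_) hi
  · exact (hc₂'.integrable_of_hasCompactSupport hs₂').sub
      (hc₁'.integrable_of_hasCompactSupport hs₁')
  · exact (hc₂.integrable_of_hasCompactSupport hs₂).sub (hc₁.integrable_of_hasCompactSupport hs₁)
  · linarith [min_le_left (g₂ y) B, le_max_left (g₁ y) 0]

theorem mul_of_nonneg (hu : RiemannIntegrableR θ u) (hv : RiemannIntegrableR θ v)
    (hu0 : ∀ y, 0 ≤ u y) (hv0 : ∀ y, 0 ≤ v y) :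
    RiemannIntegrableR θ (fun y => u y * v y) := by
  obtain ⟨Bu, hBu, hu'⟩ := hu.exists_abs_le
  obtain ⟨Bv, hBv, hv'⟩ := hv.exists_abs_le
  intro ε hε
  set δ := ε / (Bu + Bv + 1)
  have hδ : 0 < δ := by positivity
  obtain ⟨g₁, g₂, hc₁, hc₂, hs₁, hs₂, hg, hgi⟩ := hu.exists_sandwich_of_mem_Icc hBu
    (fun y => ⟨hu0 y, le_of_abs_le (hu' y)⟩) hδ
  obtain ⟨k₁, k₂, hd₁, hd₂, ht₁, ht₂, hk, hki⟩ := hv.exists_sandwich_of_mem_Icc hBv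
    (fun y => ⟨hv0 y, le_of_abs_le (hv' y)⟩) hδ
  refine ⟨fun y => g₁ y * k₁ y, fun y => g₂ y * k₂ y, hc₁.mul hd₁, hc₂.mul hd₂,
    hs₁.mul_right, hs₂.mul_right, fun y => ⟨?_, ?_⟩, ?_⟩
  · exact mul_le_mul (hg y).2.1 (hk y).2.1 (hk y).1 (hu0 y)
  · exact mul_le_mul (hg y).2.2.1 (hk y).2.2.1 (hv0 y) ((hu0 y).trans (hg y).2.2.1)
  have hgi' : Integrable (fun y => g₂ y - g₁ y) θ :=
    (hc₂.integrable_of_hasCompactSupport hs₂).sub (hc₁.integrable_of_hasCompactSupport hs₁)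
  have hki' : Integrable (fun y => k₂ y - k₁ y) θ :=
    (hd₂.integrable_of_hasCompactSupport ht₂).sub (hd₁.integrable_of_hasCompactSupport ht₁)
  -- `g₂ k₂ - g₁ k₁ = g₂ (k₂ - k₁) + k₁ (g₂ - g₁)`, and `g₂ ≤ Bu`, `k₁ ≤ Bv`
  have hpt : ∀ y, g₂ y * k₂ y - g₁ y * k₁ y ≤ Bu * (k₂ y - k₁ y) + Bv * (g₂ y - g₁ y) := by
    intro y
    obtain ⟨-, hg₁, hg₂, hgB⟩ := hg y
    obtain ⟨hk₀, hk₁, hk₂, hkB⟩ := hk y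
    nlinarith [mul_le_mul_of_nonneg_right hgB (sub_nonneg.2 (hk₁.trans hk₂)),
      mul_le_mul_of_nonneg_right (hk₁.trans (hk₂.trans hkB)) (sub_nonneg.2 (hg₁.trans hg₂))]
  calc ∫ y, (g₂ y * k₂ y - g₁ y * k₁ y) ∂θ
      ≤ ∫ y, (Bu * (k₂ y - k₁ y) + Bv * (g₂ y - g₁ y)) ∂θ :=
        integral_mono (((hc₂.mul hd₂).integrable_of_hasCompactSupport hs₂.mul_right).sub
          ((hc₁.mul hd₁).integrable_of_hasCompactSupport hs₁.mul_right))
          ((hki'.const_mul Bu).add (hgi'.const_mul Bv)) hpt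
    _ = Bu * ∫ y, (k₂ y - k₁ y) ∂θ + Bv * ∫ y, (g₂ y - g₁ y) ∂θ := by
        rw [integral_add (hki'.const_mul Bu) (hgi'.const_mul Bv), integral_const_mul,
          integral_const_mul]
    _ ≤ (Bu + Bv) * δ := by nlinarith
    _ ≤ ε := by
        rw [mul_div_assoc', div_le_iff₀ (by positivity)]
        nlinarith

theorem mul (hu : RiemannIntegrableR θ u) (hv : RiemannIntegrableR θ v) :
    RiemannIntegrableR θ (fun y => u y * v y) := by
  have hpos := fun {a : H → ℝ} (ha : RiemannIntegrableR θ a) {b : H → ℝ}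
      (hb : RiemannIntegrableR θ b) =>
    ha.posPart.mul_of_nonneg hb.posPart (fun _ => le_max_right _ _) (fun _ => le_max_right _ _)
  have hsplit : (fun y => u y * v y) = fun y =>
      (max (u y) 0 * max (v y) 0 + max (-u y) 0 * max (-v y) 0) +
        -(max (u y) 0 * max (-v y) 0 + max (-u y) 0 * max (v y) 0) := by
    funext y
    rcases le_total (u y) 0 with h₁ | h₁ <;> rcases le_total (v y) 0 with h₂ | h₂ <;>
      simp only [max_eq_left, max_eq_right, h₁, h₂, neg_nonneg, neg_nonpos] <;> ring
  rw [hsplit]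
  exact ((hpos hu hv).add (hpos hu.neg hv.neg)).add ((hpos hu hv.neg).add (hpos hu.neg hv)).neg

end RiemannIntegrableR

namespace RiemannIntegrable

variable {H : Type*} [TopologicalSpace H] [MeasurableSpace H] {θ : Measure H} {h : H → ℂ}

theorem hasCompactSupport (hh : RiemannIntegrable θ h) : HasCompactSupport h := by
  refine .intro' (hh.1.hasCompactSupport.union hh.2.hasCompactSupport)
    ((isClosed_tsupport _).union (isClosed_tsupport _)) fun y hy => ?_
  rw [mem_union, not_or] at hy
  exact Complex.ext (image_eq_zero_of_notMem_tsupport (f := fun y => (h y).re) hy.1)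
    (image_eq_zero_of_notMem_tsupport (f := fun y => (h y).im) hy.2)

theorem exists_norm_le (hh : RiemannIntegrable θ h) : ∃ B, ∀ y, ‖h y‖ ≤ B := by
  obtain ⟨B₁, -, hB₁⟩ := hh.1.exists_abs_le
  obtain ⟨B₂, -, hB₂⟩ := hh.2.exists_abs_le
  exact ⟨B₁ + B₂, fun y => (Complex.norm_le_abs_re_add_abs_im (h y)).trans
    (add_le_add (hB₁ y) (hB₂ y))⟩

theorem mul_conj_comp_sub {H : Type*} [AddGroup H] [TopologicalSpace H]
    [IsTopologicalAddGroup H] [MeasurableSpace H] [BorelSpace H] {θ : Measure H}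
    [IsFiniteMeasureOnCompacts θ] [θ.IsAddRightInvariant] {h : H → ℂ}
    (hh : RiemannIntegrable θ h) (z : H) :
    RiemannIntegrable θ (fun y => h y * conj (h (y - z))) := by
  obtain ⟨hre, him⟩ := hh
  constructor
  · simpa only [Complex.mul_re, Complex.conj_re, Complex.conj_im, mul_neg, sub_neg_eq_add]
      using (hre.mul (hre.comp_sub_right z)).add (him.mul (him.comp_sub_right z))
  · simpa only [Complex.mul_im, Complex.conj_re, Complex.conj_im, mul_neg, ← sub_eq_add_neg,
      neg_add_eq_sub] using
      (hre.mul (him.comp_sub_right z)).neg.add (him.mul (hre.comp_sub_right z))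

end RiemannIntegrable

theorem tendsto_tsum_of_support_subset {ι α M : Type*} [AddCommMonoid M] [TopologicalSpace M]
    [ContinuousAdd M] [T2Space M] {l : Filter α} [l.NeBot] {F : α → ι → M} {a : ι → M}
    (s : Finset ι) (hF : ∀ n, support (F n) ⊆ s) (h : ∀ i, Tendsto (fun n => F n i) l (𝓝 (a i))) :
    Tendsto (fun n => ∑' i, F n i) l (𝓝 (∑' i, a i)) := by
  have hF' : ∀ n, ∀ i ∉ s, F n i = 0 := fun n i hi => notMem_support.1 fun h' => hi (hF n h')
  have ha : ∀ i ∉ s, a i = 0 := fun i hi =>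
    tendsto_nhds_unique (h i) (by simpa only [hF' _ i hi] using tendsto_const_nhds)
  simp only [tsum_eq_sum (hF' _), tsum_eq_sum ha]
  exact tendsto_finsetSum s fun i _ => h i

theorem tsum_tsum_mul_conj_mul_sub {ι : Type*} [AddCommGroup ι] {w : ι → ℂ}
    (hw : (support w).Finite) (φ : ι → ℂ) :
    ∑' q, ∑' r, w q * conj (w r) * φ (q - r) = ∑' p, φ p * ∑' q, w q * conj (w (q - p)) := by
  set T : ι × ι → ℂ := fun x => w x.1 * conj (w x.2) * φ (x.1 - x.2)
  have hT : (support T).Finite := (hw.prod hw).subset fun x hx =>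
    ⟨left_ne_zero_of_mul (left_ne_zero_of_mul hx),
      fun h0 => hx (by simp only [T, h0, map_zero, mul_zero, zero_mul])⟩
  have hslice : ∀ {F : ι × ι → ℂ}, (support F).Finite → ∀ a, Summable fun b => F (a, b) :=
    fun hF a => summable_of_hasFiniteSupport (hF.preimage (Prod.mk_right_injective a).injOn)
  let e : ι × ι ≃ ι × ι :=
    ⟨fun y => (y.2, y.2 - y.1), fun x => (x.1 - x.2, x.1), fun y => by simp, fun x => by simp⟩
  have hTe : (support (T ∘ e)).Finite := hT.preimage e.injective.injOn
  calc ∑' q, ∑' r, T (q, r)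
      = ∑' x, T x := (Summable.tsum_prod' (summable_of_hasFiniteSupport hT) (hslice hT)).symm
    _ = ∑' y, T (e y) := (e.tsum_eq T).symm
    _ = ∑' p, ∑' q, T (e (p, q)) :=
        Summable.tsum_prod' (summable_of_hasFiniteSupport hTe) (hslice hTe)
    _ = ∑' p, φ p * ∑' q, w q * conj (w (q - p)) := by
        refine tsum_congr fun p => ?_
        rw [← tsum_mul_left]
        refine tsum_congr fun q => ?_
        simp only [T, e, Equiv.coe_fn_mk, sub_sub_cancel]
        ring

section Lattice

variable {E : Type*} [AddCommGroup E] [TopologicalSpace E] [IsTopologicalAddGroup E]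
  (L : AddSubgroup E)

theorem AddSubgroup.exists_mem_nhds_zero_sub [DiscreteTopology L] :
    ∃ W ∈ 𝓝 (0 : E), ∀ p ∈ L, p ∈ W - W → p = 0 := by
  obtain ⟨U, hUo, hU⟩ := isOpen_induced_iff.1 (isOpen_discrete ({0} : Set L))
  have hU0 : ∀ p ∈ L, p ∈ U → p = 0 := fun p hp hpU => by
    simpa using (hU.symm ▸ hpU : (⟨p, hp⟩ : L) ∈ ({0} : Set L))
  have hsub : (fun x : E × E => x.1 - x.2) ⁻¹' U ∈ 𝓝 0 ×ˢ 𝓝 0 := by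
    rw [← nhds_prod_eq]
    refine (hUo.preimage continuous_sub).mem_nhds ?_
    simpa using (hU.symm ▸ rfl : (0 : L) ∈ Subtype.val ⁻¹' U)
  obtain ⟨W, hW, hWW⟩ := mem_prod_self_iff.1 hsub
  refine ⟨W, hW, fun p hp hpW => hU0 p hp ?_⟩
  obtain ⟨a, ha, b, hb, rfl⟩ := hpW
  exact hWW (mk_mem_prod ha hb)

variable [DiscreteTopology L]

theorem AddSubgroup.finite_setOf_mem_of_isCompact {K : Set E} (hK : IsCompact K) :
    {q : L | (q : E) ∈ K}.Finite := by
  obtain ⟨W, hW, hsep⟩ := L.exists_mem_nhds_zero_sub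
  obtain ⟨t, -, hKt⟩ := hK.elim_nhds_subcover (fun x => x +ᵥ W)
    fun x _ => by simpa using (vadd_mem_nhds_vadd_iff x).2 hW
  have hone : ∀ x : E, {q : L | (q : E) ∈ x +ᵥ W}.Subsingleton := by
    rintro x q ⟨v, hv, hqv⟩ r ⟨w, hw, hrw⟩
    refine sub_eq_zero.1 (Subtype.ext (hsep _ (q - r).2 ⟨v, hv, w, hw, ?_⟩))
    simp only [AddSubgroup.coe_sub, ← hqv, ← hrw, vadd_eq_add]
    abel
  refine ((t.finite_toSet.biUnion fun x _ => (hone x).finite).subset fun q hq => ?_)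
  simpa using hKt hq

end Lattice

theorem exists_isOpen_prod_subset_isCompact_closure {X Y : Type*} [TopologicalSpace X]
    [R1Space X] [WeaklyLocallyCompactSpace X] [TopologicalSpace Y] [R1Space Y]
    [WeaklyLocallyCompactSpace Y] {x : X} {y : Y} {W : Set (X × Y)} (hW : W ∈ 𝓝 (x, y)) :
    ∃ U V, IsOpen U ∧ x ∈ U ∧ IsCompact (closure U) ∧ IsOpen V ∧ y ∈ V ∧
      IsCompact (closure V) ∧ U ×ˢ V ⊆ W := by
  obtain ⟨U, V, hUo, hxU, hVo, hyV, hUV⟩ := mem_nhds_prod_iff'.1 hW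
  obtain ⟨U', hU'o, hxU', hU'c⟩ := exists_isOpen_mem_isCompact_closure x
  obtain ⟨V', hV'o, hyV', hV'c⟩ := exists_isOpen_mem_isCompact_closure y
  exact ⟨U ∩ U', V ∩ V', hUo.inter hU'o, ⟨hxU, hxU'⟩,
    hU'c.of_isClosed_subset isClosed_closure (closure_mono inter_subset_right),
    hVo.inter hV'o, ⟨hyV, hyV'⟩,
    hV'c.of_isClosed_subset isClosed_closure (closure_mono inter_subset_right),
    (prod_mono inter_subset_left inter_subset_left).trans hUV⟩

theorem Finset.card_mul_measure_eq_measure_add {E : Type*} [AddCommGroup E] [MeasurableSpace E]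
    [MeasurableAdd E] (μ : Measure E) [μ.IsAddLeftInvariant] {V : Set E} (hV : MeasurableSet V)
    (s : Finset E) (hs : ∀ x ∈ s, ∀ y ∈ s, x - y ∈ V - V → x = y) :
    s.card * μ V = μ (s + V) := by
  have hdisj : (s : Set E).PairwiseDisjoint fun x => x +ᵥ V := by
    refine fun x hx y hy hxy => Set.disjoint_left.2 ?_
    rintro _ ⟨v, hv, rfl⟩ ⟨w, hw, hvw⟩
    refine hxy (hs x hx y hy ⟨w, hw, v, hv, ?_⟩)
    rw [sub_eq_sub_iff_add_eq_add, add_comm]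
    exact hvw
  have hunion : (s : Set E) + V = ⋃ x ∈ s, x +ᵥ V := by
    rw [← Set.iUnion_add_left_image, Finset.set_biUnion_coe]
    rfl
  rw [hunion, measure_biUnion_finset hdisj fun x _ => hV.const_vadd x]
  simp [measure_vadd]

theorem AddSubgroup.card_mul_measure_le {G H : Type*} [AddCommGroup G] [MeasurableSpace G]
    [MeasurableAdd G] {θ : Measure G} [θ.IsAddLeftInvariant] [AddCommGroup H]
    (L : AddSubgroup (G × H)) {VG : Set G} {VH : Set H} (hVG : MeasurableSet VG)
    (hVG0 : 0 ∈ VG) (hsep : ∀ p ∈ L, p ∈ VG ×ˢ VH - VG ×ˢ VH → p = 0) {S : Set G}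
    {T : Finset H} (s : Finset L)
    (hs : ∀ q ∈ s, (q : G × H).1 ∈ S ∧ (q : G × H).2 ∈ ⋃ y ∈ T, y +ᵥ VH) :
    s.card * θ VG ≤ T.card * θ (S + VG) := by
  classical
  -- on each fibre `y + VH` the projection to `G` is injective with `VG`-separated image
  set fiber : H → Finset L := fun y => s.filter fun q => (q : G × H).2 ∈ y +ᵥ VH
  have hsep_fiber : ∀ y, ∀ q ∈ fiber y, ∀ r ∈ fiber y,
      (q : G × H).1 - (r : G × H).1 ∈ VG - VG → q = r := by
    rintro y q hq r hr ⟨a, ha, b, hb, hab⟩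
    obtain ⟨v, hv, hqv⟩ := (Finset.mem_filter.1 hq).2
    obtain ⟨w, hw, hrw⟩ := (Finset.mem_filter.1 hr).2
    refine sub_eq_zero.1 (Subtype.ext (hsep _ (q - r).2 ⟨(a, v), ⟨ha, hv⟩, (b, w), ⟨hb, hw⟩, ?_⟩))
    refine Prod.ext hab ?_
    simp only [Prod.snd_sub, AddSubgroup.coe_sub, ← hqv, ← hrw, vadd_eq_add]
    abel
  have hfiber : ∀ y, (fiber y).card * θ VG ≤ θ (S + VG) := by
    intro y
    have hinj : InjOn (fun q : L => (q : G × H).1) (fiber y) := fun q hq r hr hqr =>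
      hsep_fiber y q hq r hr ⟨0, hVG0, 0, hVG0, by simp [hqr]⟩
    rw [← Finset.card_image_of_injOn hinj, Finset.card_mul_measure_eq_measure_add θ hVG]
    · refine measure_mono (add_subset_add_right ?_)
      simp only [Finset.coe_image]
      rintro _ ⟨q, hq, rfl⟩
      exact (hs q (Finset.mem_filter.1 hq).1).1
    · simp only [Finset.mem_image]
      rintro _ ⟨q, hq, rfl⟩ _ ⟨r, hr, rfl⟩ hqr
      rw [hsep_fiber y q hq r hr hqr]
  calc s.card * θ VG ≤ (T.biUnion fiber).card * θ VG := by
        gcongr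
        intro q hq
        obtain ⟨y, hy, hqy⟩ := mem_iUnion₂.1 (hs q hq).2
        exact Finset.mem_biUnion.2 ⟨y, hy, Finset.mem_filter.2 ⟨hq, hqy⟩⟩
    _ ≤ (∑ y ∈ T, (fiber y).card : ℕ) * θ VG := by gcongr; exact Finset.card_biUnion_le
    _ = ∑ y ∈ T, (fiber y).card * θ VG := by push_cast; rw [Finset.sum_mul]
    _ ≤ ∑ _y ∈ T, θ (S + VG) := Finset.sum_le_sum fun y _ => hfiber y
    _ = T.card * θ (S + VG) := by simp

section VanHove

variable {G : Type*} [AddCommGroup G] [TopologicalSpace G]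

theorem diff_vadd_add_subset_vhBoundary {A V K : Set G} {t : G} (hV : V ⊆ K)
    (htV : t +ᵥ V ⊆ K) : A \ (t +ᵥ A) + V ⊆ vhBoundary K A := by
  rintro _ ⟨a, ⟨haA, hat⟩, v, hv, rfl⟩
  have hat' : a - t ∈ Aᶜ := fun h => hat ⟨a - t, h, by simp [vadd_eq_add]⟩
  by_cases hc : a + v ∈ closure A
  · refine Or.inr ⟨⟨t + v, htV ⟨v, hv, rfl⟩, a - t, subset_closure hat', by
      show t + v + (a - t) = a + v; abel⟩, hc⟩
  · exact Or.inl ⟨⟨v, hV hv, a, subset_closure haA, add_comm v a⟩,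
      subset_closure fun h => hc (subset_closure h)⟩

theorem vhBoundary_subset (U W : Set G) : vhBoundary U W ⊆ (U + closure W) ∪ closure W := by
  rintro x (hx | hx)
  exacts [Or.inl hx.1, Or.inr hx.2]

theorem IsVanHove.tendsto_toReal_measure_vhBoundary_div [MeasurableSpace G] {θ : Measure G}
    {A : ℕ → Set G} (hA : IsVanHove θ A) {K : Set G} (hK : IsCompact K) :
    Tendsto (fun n => (θ (vhBoundary K (A n))).toReal / (θ (A n)).toReal) atTop (𝓝 0) := by
  simpa only [ENNReal.toReal_div, Function.comp_def, ENNReal.toReal_zero] using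
    (ENNReal.tendsto_toReal ENNReal.zero_ne_top).comp (hA.2.2.2 K hK)

end VanHove

/-- The weight of `ω_h|_A` at the point `x` of the lattice. -/
noncomputable def modelWeight {G H : Type*} (A : Set G) (h : H → ℂ) (x : G × H) : ℂ :=
  A.indicator (fun _ => h x.2) x.1

section ModelWeight

variable {G H : Type*}

theorem support_modelWeight_subset (A : Set G) (g : H → ℂ) :
    support (modelWeight A g) ⊆ A ×ˢ support g := fun x hx => by
  by_cases hA : x.1 ∈ A
  · exact ⟨hA, by simpa [modelWeight, hA] using hx⟩
  · simp [modelWeight, hA] at hx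

theorem norm_modelWeight_le {A : Set G} {g : H → ℂ} {B : ℝ} (hB : ∀ y, ‖g y‖ ≤ B)
    (x : G × H) : ‖modelWeight A g x‖ ≤ B := by
  by_cases hA : x.1 ∈ A
  · simpa [modelWeight, hA] using hB x.2
  · simpa [modelWeight, hA] using (norm_nonneg _).trans (hB x.2)

theorem modelWeight_sub_modelWeight_inter (A B : Set G) (g : H → ℂ) (x : G × H) :
    modelWeight A g x - modelWeight (A ∩ B) g x = modelWeight (A \ B) g x := by
  by_cases hA : x.1 ∈ A <;> by_cases hB : x.1 ∈ B <;> simp [modelWeight, hA, hB]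

theorem modelWeight_mul_conj_sub [AddCommGroup G] [Sub H] (A : Set G) (h : H → ℂ)
    (x z : G × H) :
    modelWeight A h x * conj (modelWeight A h (x - z)) =
      modelWeight (A ∩ (z.1 +ᵥ A)) (fun y => h y * conj (h (y - z.2))) x := by
  have hmem : x.1 ∈ z.1 +ᵥ A ↔ x.1 - z.1 ∈ A := by
    rw [mem_vadd_set_iff_neg_vadd_mem, vadd_eq_add, neg_add_eq_sub]
  by_cases hA : x.1 ∈ A <;> by_cases hA' : x.1 - z.1 ∈ A <;>
    simp [modelWeight, hA, hA', hmem, Prod.fst_sub, Prod.snd_sub]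

theorem mem_sub_of_tsum_modelWeight_mul_conj_ne_zero [AddCommGroup G] [AddCommGroup H]
    {L : AddSubgroup (G × H)} {A : Set G} {h : H → ℂ} {p : L}
    (hp : ∑' q : L, modelWeight A h q * conj (modelWeight A h ↑(q - p)) ≠ 0) :
    (p : G × H).2 ∈ support h - support h := by
  obtain ⟨q, hq⟩ : ∃ q : L, modelWeight A h q * conj (modelWeight A h ↑(q - p)) ≠ 0 := by
    by_contra! hzero
    exact hp (by rw [tsum_congr hzero, tsum_zero])
  have h₁ := (support_modelWeight_subset A h (left_ne_zero_of_mul hq)).2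
  have h₂ := (support_modelWeight_subset A h
    ((map_ne_zero (starRingEnd ℂ)).1 (right_ne_zero_of_mul hq))).2
  exact ⟨_, h₁, _, h₂, by simp⟩

theorem AddSubgroup.finite_support_modelWeight [TopologicalSpace G] [AddCommGroup G]
    [IsTopologicalAddGroup G] [TopologicalSpace H] [AddCommGroup H] [IsTopologicalAddGroup H]
    (L : AddSubgroup (G × H)) [DiscreteTopology L] {A K : Set G} (hK : IsCompact K) (hA : A ⊆ K)
    {g : H → ℂ} (hg : HasCompactSupport g) : (support fun q : L => modelWeight A g q).Finite :=
  (L.finite_setOf_mem_of_isCompact (hK.prod hg)).subset fun _ hq =>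
    Set.prod_mono hA (subset_tsupport g) (support_modelWeight_subset A g hq)

end ModelWeight

section CutAndProject

variable {G H : Type*}
  [AddCommGroup G] [TopologicalSpace G] [IsTopologicalAddGroup G] [MeasurableSpace G] [BorelSpace G]
  [AddCommGroup H] {θG : Measure G} [θG.IsAddHaarMeasure] (L : AddSubgroup (G × H))

theorem norm_tsum_modelWeight_mul_le {VG : Set G} {VH : Set H} (hVG : IsOpen VG)
    (hVG0 : 0 ∈ VG) (hsep : ∀ p ∈ L, p ∈ VG ×ˢ VH - VG ×ˢ VH → p = 0) {S : Set G}
    {K : Set H} {T : Finset H} (hKT : K ⊆ ⋃ y ∈ T, y +ᵥ VH)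
    (hfin : {q : L | (q : G × H) ∈ S ×ˢ K}.Finite) (htop : θG (S + VG) ≠ ⊤) {g : H → ℂ}
    (hgK : support g ⊆ K) {B : ℝ} (hgB : ∀ y, ‖g y‖ ≤ B) :
    ‖∑' q : L, modelWeight S g q‖ * (θG VG).toReal ≤ B * T.card * (θG (S + VG)).toReal := by
  set s := hfin.toFinset
  have hsum : ∑' q : L, modelWeight S g q = ∑ q ∈ s, modelWeight S g q :=
    tsum_eq_sum fun q hq => notMem_support.1 fun hq' => hq <| hfin.mem_toFinset.2 <|
      Set.prod_mono Subset.rfl hgK (support_modelWeight_subset S g hq')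
  have hnorm : ‖∑' q : L, modelWeight S g q‖ ≤ s.card * B := by
    rw [hsum]
    simpa using norm_sum_le_of_le s fun q _ => norm_modelWeight_le hgB (q : G × H)
  have hcount : (s.card : ℝ) * (θG VG).toReal ≤ T.card * (θG (S + VG)).toReal := by
    simpa only [ENNReal.toReal_mul, ENNReal.toReal_natCast] using
      ENNReal.toReal_mono (ENNReal.mul_ne_top (ENNReal.natCast_ne_top _) htop)
        (L.card_mul_measure_le hVG.measurableSet hVG0 hsep s fun q hq =>
          ⟨(hfin.mem_toFinset.1 hq).1, hKT (hfin.mem_toFinset.1 hq).2⟩)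
  have hB : 0 ≤ B := (norm_nonneg _).trans (hgB 0)
  calc ‖∑' q : L, modelWeight S g q‖ * (θG VG).toReal
      ≤ s.card * B * (θG VG).toReal := by gcongr
    _ = B * (s.card * (θG VG).toReal) := by ring
    _ ≤ B * (T.card * (θG (S + VG)).toReal) := by gcongr
    _ = B * T.card * (θG (S + VG)).toReal := by ring

variable [TopologicalSpace H] [IsTopologicalAddGroup H]

theorem exists_norm_tsum_modelWeight_diff_vadd_le [DiscreteTopology L] [LocallyCompactSpace G]
    [LocallyCompactSpace H] {g : H → ℂ} (hg : HasCompactSupport g) {B : ℝ}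
    (hgB : ∀ y, ‖g y‖ ≤ B) (t : G) :
    ∃ K : Set G, IsCompact K ∧ ∃ C : ℝ, ∀ A : Set G, IsCompact A →
      ‖∑' q : L, modelWeight (A \ (t +ᵥ A)) g q‖ ≤ C * (θG (vhBoundary K A)).toReal := by
  obtain ⟨W, hW, hsep⟩ := L.exists_mem_nhds_zero_sub
  obtain ⟨VG, VH, hVG, hVG0, hVGc, hVH, hVH0, -, hVW⟩ :=
    exists_isOpen_prod_subset_isCompact_closure hW
  have hsep' : ∀ p ∈ L, p ∈ VG ×ˢ VH - VG ×ˢ VH → p = 0 :=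
    fun p hp hpV => hsep p hp (sub_subset_sub hVW hVW hpV)
  obtain ⟨T, -, hKT⟩ := hg.isCompact.elim_nhds_subcover (fun y => y +ᵥ VH) fun y _ => by
    simpa only [vadd_eq_add, add_zero] using
      (vadd_mem_nhds_vadd_iff (a := 0) y).2 (hVH.mem_nhds hVH0)
  have hD : 0 < (θG VG).toReal := ENNReal.toReal_pos (hVG.measure_ne_zero θG ⟨0, hVG0⟩)
    (measure_mono subset_closure |>.trans_lt hVGc.measure_lt_top).ne
  refine ⟨closure VG ∪ (t +ᵥ closure VG), hVGc.union (hVGc.vadd t),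
    B * T.card / (θG VG).toReal, fun A hA => ?_⟩
  have hsub : A \ (t +ᵥ A) + VG ⊆ vhBoundary (closure VG ∪ (t +ᵥ closure VG)) A :=
    diff_vadd_add_subset_vhBoundary (subset_closure.trans subset_union_left)
      ((vadd_set_mono subset_closure).trans subset_union_right)
  have hvh : θG (vhBoundary (closure VG ∪ (t +ᵥ closure VG)) A) ≠ ⊤ :=
    (measure_mono (vhBoundary_subset _ _) |>.trans_lt
      (((hVGc.union (hVGc.vadd t)).add hA.closure).union hA.closure).measure_lt_top).ne
  have hfin : {q : L | (q : G × H) ∈ (A \ (t +ᵥ A)) ×ˢ tsupport g}.Finite :=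
    (L.finite_setOf_mem_of_isCompact (hA.prod hg)).subset
      fun q hq => prod_mono sdiff_subset Subset.rfl hq
  have key := norm_tsum_modelWeight_mul_le L hVG hVG0 hsep' hKT hfin
    ((measure_mono hsub).trans_lt hvh.lt_top).ne (subset_tsupport g) hgB
  rw [← le_div_iff₀ hD] at key
  refine key.trans ?_
  rw [div_mul_eq_mul_div, div_le_div_iff_of_pos_right hD]
  have := ENNReal.toReal_mono hvh (measure_mono hsub)
  have hB : 0 ≤ B := (norm_nonneg _).trans (hgB 0)
  gcongr

theorem tendsto_inv_measure_smul_tsum_modelWeight_mul_conj [DiscreteTopology L]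
    [LocallyCompactSpace G] [LocallyCompactSpace H] {A : ℕ → Set G} (hA : IsVanHove θG A)
    {h : H → ℂ} (hh : HasCompactSupport h) {B : ℝ} (hB : ∀ y, ‖h y‖ ≤ B) (z : L) {a : ℂ}
    (hdens : Tendsto (fun n => (θG (A n)).toReal⁻¹ •
      ∑' q : L, modelWeight (A n) (fun y => h y * conj (h (y - (z : G × H).2))) q)
      atTop (𝓝 a)) :
    Tendsto (fun n => (θG (A n)).toReal⁻¹ •
      ∑' q : L, modelWeight (A n) h q * conj (modelWeight (A n) h ↑(q - z))) atTop (𝓝 a) := by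
  set g : H → ℂ := fun y => h y * conj (h (y - (z : G × H).2))
  have hgh : support g ⊆ tsupport h := (support_mul_subset_left _ _).trans (subset_tsupport h)
  have hgB : ∀ y, ‖g y‖ ≤ B * B := fun y => by
    simpa only [g, norm_mul, Complex.norm_conj] using
      mul_le_mul (hB y) (hB _) (norm_nonneg _) ((norm_nonneg _).trans (hB y))
  obtain ⟨K, hK, C, hC⟩ := exists_norm_tsum_modelWeight_diff_vadd_le (θG := θG) L
    (hh.mono' hgh) hgB (z : G × H).1
  have hsumm : ∀ n, ∀ S ⊆ A n, Summable fun q : L => modelWeight S g q := fun n S hS =>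
    summable_of_hasFiniteSupport (L.finite_support_modelWeight (hA.1 n) hS (hh.mono' hgh))
  -- the error term lives over `A n \ (z + A n)`, which is close to the boundary of `A n`
  have hdiff : ∀ n, ∑' q : L, modelWeight (A n) g q -
      ∑' q : L, modelWeight (A n) h q * conj (modelWeight (A n) h ↑(q - z)) =
      ∑' q : L, modelWeight (A n \ ((z : G × H).1 +ᵥ A n)) g q := by
    intro n
    simp_rw [AddSubgroup.coe_sub, modelWeight_mul_conj_sub]
    rw [← (hsumm n _ Subset.rfl).tsum_sub (hsumm n _ inter_subset_left)]
    simp_rw [modelWeight_sub_modelWeight_inter]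
  refine hdens.congr_dist (squeeze_zero (fun _ => dist_nonneg) (fun n => ?_)
    (by simpa using (hA.tendsto_toReal_measure_vhBoundary_div hK).const_mul C))
  rw [dist_eq_norm, ← smul_sub, hdiff, norm_smul, norm_inv,
    Real.norm_of_nonneg ENNReal.toReal_nonneg]
  calc _ ≤ (θG (A n)).toReal⁻¹ * (C * (θG (vhBoundary K (A n))).toReal) := by
        gcongr; exact hC _ (hA.1 n)
    _ = _ := by ring

end CutAndProject

theorem autocorrelation_weighted_model_set_general
    {G H : Type*}
    [AddCommGroup G] [TopologicalSpace G] [IsTopologicalAddGroup G] [LocallyCompactSpace G]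
    [MeasurableSpace G] [BorelSpace G]
    [AddCommGroup H] [TopologicalSpace H] [IsTopologicalAddGroup H] [LocallyCompactSpace H]
    [MeasurableSpace H] [BorelSpace H]
    (θG : Measure G) [θG.IsAddHaarMeasure] (θH : Measure H) [θH.IsAddHaarMeasure]
    (L : AddSubgroup (G × H)) [DiscreteTopology L]
    (F : Set (G × H))
    -- the density formula holds in `(G, H, ℒ)`:
    (hDF : ∀ g : H → ℂ, RiemannIntegrable θH g → ∀ B : ℕ → Set G, IsVanHove θG B →
      TendstoUniformly
        (fun n t => ((θG (B n)).toReal)⁻¹ •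
          ∑' q : L, (t +ᵥ B n).indicator (fun _ => g (q : G × H).2) (q : G × H).1)
        (fun _ : G => ((((θG.prod θH) F).toReal)⁻¹ : ℝ) • ∫ y, g y ∂θH) atTop)
    (h : H → ℂ) (hh : RiemannIntegrable θH h)
    (A : ℕ → Set G) (hA : IsVanHove θG A) :
    ∀ f : G → ℂ, Continuous f → HasCompactSupport f →
      Tendsto
        (fun n => ((θG (A n)).toReal)⁻¹ •
          ∑' q : L, ∑' r : L,
            (A n).indicator (fun _ => h (q : G × H).2) (q : G × H).1 *
              (starRingEnd ℂ) ((A n).indicator (fun _ => h (r : G × H).2) (r : G × H).1) *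
              f ((q : G × H).1 - (r : G × H).1))
        atTop
        (nhds (((((θG.prod θH) F).toReal)⁻¹ : ℝ) •
          ∑' q : L, (∫ y, h y * (starRingEnd ℂ) (h (y - (q : G × H).2)) ∂θH) *
            f (q : G × H).1)) := by
  intro f _ hfc
  obtain ⟨B, hB⟩ := hh.exists_norm_le
  have hK := hh.hasCompactSupport
  have hP : {p : L | (p : G × H) ∈ tsupport f ×ˢ (tsupport h - tsupport h)}.Finite :=
    L.finite_setOf_mem_of_isCompact
      (hfc.prod (by simpa only [sub_eq_add_neg] using hK.isCompact.add hK.isCompact.neg))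
  convert tendsto_tsum_of_support_subset hP.toFinset (fun n p hp => ?hsupp) fun p =>
    (tendsto_inv_measure_smul_tsum_modelWeight_mul_conj L hA hK hB p ?hdens).const_mul
      (f (p : G × H).1) using 1
  case hdens =>
    simpa only [zero_vadd, modelWeight] using (hDF _ (hh.mul_conj_comp_sub _) A hA).tendsto_at 0
  · funext n
    exact (congrArg _ (tsum_tsum_mul_conj_mul_sub
      (L.finite_support_modelWeight (hA.1 n) Subset.rfl hK) fun p : L => f (p : G × H).1)).trans
      ((tsum_const_smul'' _).symm.trans (tsum_congr fun p => (mul_smul_comm _ _ _).symm))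
  · exact congrArg _ <| (tsum_const_smul'' _).symm.trans
      (tsum_congr fun p => by rw [mul_comm, mul_smul_comm])
  · rw [Finset.mem_coe, hP.mem_toFinset]
    exact ⟨subset_tsupport f (left_ne_zero_of_mul hp),
      sub_subset_sub (subset_tsupport h) (subset_tsupport h)
        (mem_sub_of_tsum_modelWeight_mul_conj_ne_zero
          (right_ne_zero_of_smul (right_ne_zero_of_mul hp)))⟩

/-- Autocorrelation of weighted model sets: in a cut-and-project
scheme `(G, H, ℒ)` with `G` σ-compact satisfying the density formula, for every Riemann
integrable `h : H → ℂ`, the finite autocorrelation measures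
`(1/θ_G(A n)) (ω_h|_{A n}) * (ω_h|_{A n})~` converge vaguely, for every van Hove
sequence `(A n)`, to `dens(ℒ) ⬝ ω_{h * h̃}`. -/
theorem autocorrelation_weighted_model_set
    {G H : Type*}
    [AddCommGroup G] [TopologicalSpace G] [IsTopologicalAddGroup G] [LocallyCompactSpace G]
    [SigmaCompactSpace G] [MeasurableSpace G] [BorelSpace G]
    [AddCommGroup H] [TopologicalSpace H] [IsTopologicalAddGroup H] [LocallyCompactSpace H]
    [MeasurableSpace H] [BorelSpace H]
    (θG : Measure G) [θG.IsAddHaarMeasure] (θH : Measure H) [θH.IsAddHaarMeasure]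
    [SigmaFinite θG] [SigmaFinite θH]
    (L : AddSubgroup (G × H)) [DiscreteTopology L] [CompactSpace ((G × H) ⧸ L)]
    (F : Set (G × H)) (hF : IsAddFundamentalDomain L F (θG.prod θH))
    (hF0 : (θG.prod θH) F ≠ 0) (hFtop : (θG.prod θH) F ≠ ⊤)
    -- the density formula holds in `(G, H, ℒ)`:
    (hDF : ∀ g : H → ℂ, RiemannIntegrable θH g → ∀ B : ℕ → Set G, IsVanHove θG B →
      TendstoUniformly
        (fun n t => ((θG (B n)).toReal)⁻¹ •
          ∑' q : L, (t +ᵥ B n).indicator (fun _ => g (q : G × H).2) (q : G × H).1)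
        (fun _ : G => ((((θG.prod θH) F).toReal)⁻¹ : ℝ) • ∫ y, g y ∂θH) atTop)
    (h : H → ℂ) (hh : RiemannIntegrable θH h)
    (A : ℕ → Set G) (hA : IsVanHove θG A) :
    ∀ f : G → ℂ, Continuous f → HasCompactSupport f →
      Tendsto
        (fun n => ((θG (A n)).toReal)⁻¹ •
          ∑' q : L, ∑' r : L,
            (A n).indicator (fun _ => h (q : G × H).2) (q : G × H).1 *
              (starRingEnd ℂ) ((A n).indicator (fun _ => h (r : G × H).2) (r : G × H).1) *
              f ((q : G × H).1 - (r : G × H).1))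
        atTop
        (nhds (((((θG.prod θH) F).toReal)⁻¹ : ℝ) •
          ∑' q : L, (∫ y, h y * (starRingEnd ℂ) (h (y - (q : G × H).2)) ∂θH) *
            f (q : G × H).1)) :=
  autocorrelation_weighted_model_set_general θG θH L F hDF h hh A hA
end

section
/- Let (G,H,ℒ) be a cut-and-project scheme with G σ-compact, and let h ∈ C_0(H) be such that ω_h = ∑_{(x,y)∈ℒ} h(y) δ_x is a translation bounded measure on G. Then h ∈ L¹(H). -/
open MeasureTheory Filter Topology Set
open scoped ENNReal Pointwise

/-!
Because `L` is cocompact and its `H`-coordinates are dense, there are a compact window `W ⊆ G`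
and an open `V ⊆ H` of finite Haar measure such that the translates `ℓ₂ + V` with `ℓ ∈ L`,
`ℓ₁ ∈ W` cover `H`. Translation boundedness bounds `∑_{ℓ₁ ∈ s + W} |h(ℓ₂)|` uniformly in `s`;
reindexing by `ℓ ↦ ℓ₀ + ℓ` turns this into `∑_{ℓ₁ ∈ W} |h(y + ℓ₂)| ≤ C` for `y` in the dense set of
`H`-coordinates, and lower semicontinuity extends it to all `y ∈ H`. Integrating over `V` gives
`∫_K |h| ≤ C θ_H(V)` for every compact `K`, and since `h` vanishes at infinity its support is
exhausted by the compact sets `{|h| ≥ 1/n}`.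
-/

theorem AddSubgroup.exists_isCompact_add_eq_univ {X : Type*} [AddGroup X] [TopologicalSpace X]
    [IsTopologicalAddGroup X] [LocallyCompactSpace X] (L : AddSubgroup X)
    [CompactSpace (X ⧸ L)] : ∃ K : Set X, IsCompact K ∧ K + (L : Set X) = univ := by
  obtain ⟨N, hN, hN₀⟩ := exists_compact_mem_nhds (0 : X)
  have hN₀' : (0 : X) ∈ interior N := mem_interior_iff_mem_nhds.2 hN₀
  obtain ⟨t, ht⟩ := isCompact_univ.elim_finite_subcover
    (fun x : X => ((↑) '' (x +ᵥ interior N) : Set (X ⧸ L)))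
    (fun x => QuotientAddGroup.isOpenMap_coe _ (isOpen_interior.vadd x))
    (fun q _ => by
      obtain ⟨z, rfl⟩ := QuotientAddGroup.mk_surjective q
      exact mem_iUnion.2 ⟨z, z, by simpa using vadd_mem_vadd_set (a := z) hN₀', rfl⟩)
  refine ⟨⋃ x ∈ t, x +ᵥ N, t.finite_toSet.isCompact_biUnion fun x _ => hN.vadd x,
    eq_univ_of_forall fun z => ?_⟩
  obtain ⟨x, hx, c, hc, hcz⟩ := mem_iUnion₂.1 (ht (mem_univ (z : X ⧸ L)))
  exact ⟨c, mem_biUnion hx (vadd_set_mono interior_subset hc), -c + z,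
    QuotientAddGroup.eq.1 hcz, add_neg_cancel_left c z⟩

theorem AddSubgroup.exists_isCompact_forall_exists_fst_mem_snd_vadd_mem
    {G H : Type*} [AddCommGroup G] [TopologicalSpace G] [IsTopologicalAddGroup G]
    [LocallyCompactSpace G] [AddCommGroup H] [TopologicalSpace H] [IsTopologicalAddGroup H]
    [LocallyCompactSpace H] (L : AddSubgroup (G × H)) [CompactSpace ((G × H) ⧸ L)]
    (hdense : Dense (Prod.snd '' (L : Set (G × H)))) {V : Set H} (hV : IsOpen V)
    (hV₀ : V.Nonempty) :
    ∃ W : Set G, IsCompact W ∧ ∀ y : H, ∃ ℓ ∈ L, ℓ.1 ∈ W ∧ y ∈ ℓ.2 +ᵥ V := by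
  obtain ⟨K, hK, hKL⟩ := L.exists_isCompact_add_eq_univ
  have hcover : ∀ p : H, ∃ ℓ ∈ L, p ∈ ℓ.2 +ᵥ V := by
    intro p
    obtain ⟨v, hv⟩ := hV₀
    obtain ⟨_, ⟨ℓ, hℓ, rfl⟩, hpℓ⟩ := hdense.exists_mem_open
      (hV.preimage (continuous_neg.add continuous_const) : IsOpen {z | -z + p ∈ V})
      ⟨p - v, by simpa using hv⟩
    exact ⟨ℓ, hℓ, mem_vadd_set_iff_neg_vadd_mem.2 hpℓ⟩
  obtain ⟨t, ht⟩ := (hK.image continuous_snd).elim_finite_subcover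
    (fun ℓ : L => (ℓ : G × H).2 +ᵥ V) (fun ℓ => hV.vadd _) fun p _ => by
      obtain ⟨ℓ, hℓ, hp⟩ := hcover p
      exact mem_iUnion.2 ⟨⟨ℓ, hℓ⟩, hp⟩
  refine ⟨⋃ ℓ ∈ t, (fun c : G × H => (ℓ : G × H).1 - c.1) '' K,
    t.finite_toSet.isCompact_biUnion fun ℓ _ => hK.image (by fun_prop), fun y => ?_⟩
  obtain ⟨c, hc, ℓ₀, hℓ₀, hsum⟩ := hKL.symm ▸ mem_univ ((0 : G), y)
  obtain ⟨ℓ, hℓt, v, hv, hcv⟩ := mem_iUnion₂.1 (ht (mem_image_of_mem Prod.snd hc))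
  obtain ⟨hsum₁, hsum₂⟩ := Prod.ext_iff.1 hsum
  refine ⟨ℓ₀ + ℓ, add_mem hℓ₀ ℓ.2, mem_biUnion hℓt ⟨c, hc, ?_⟩, v, hv, ?_⟩
  · simp only [Prod.fst_add] at hsum₁ ⊢
    rw [eq_neg_of_add_eq_zero_right hsum₁]; abel
  · simp only [Prod.snd_add, vadd_eq_add] at hsum₂ hcv ⊢
    rw [← hsum₂, ← hcv]; abel

theorem MeasureTheory.Measure.sum_smul_dirac_apply {ι X : Type*} [MeasurableSpace X]
    (w : ι → ℝ≥0∞) (x : ι → X) {A : Set X} (hA : MeasurableSet A) :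
    (Measure.sum fun i => w i • Measure.dirac (x i)) A = ∑' i, (x ⁻¹' A).indicator w i := by
  simp only [Measure.sum_apply _ hA, Measure.smul_apply, smul_eq_mul, Measure.dirac_apply' _ hA]
  congr 1 with i
  by_cases hi : x i ∈ A <;> simp [hi]

theorem AddSubgroup.tsum_indicator_le_of_dense_snd {G H : Type*} [AddCommGroup G]
    [MeasurableSpace G] [MeasurableAdd G] [AddCommGroup H] [TopologicalSpace H] [ContinuousAdd H]
    (L : AddSubgroup (G × H)) (hdense : Dense (Prod.snd '' (L : Set (G × H))))
    {f : H → ℝ≥0∞} (hf : Continuous f) {A : Set G} (hA : MeasurableSet A) {C : ℝ≥0∞}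
    (hC : ∀ s : G,
      (Measure.sum fun q : L => f (q : G × H).2 • Measure.dirac (q : G × H).1) (s +ᵥ A) ≤ C)
    (y : H) :
    ∑' q : L, {q : L | (q : G × H).1 ∈ A}.indicator (fun q => f (y + (q : G × H).2)) q ≤ C := by
  induction y using hdense.induction with
  | mem _ hy =>
    obtain ⟨ℓ, hℓ, rfl⟩ := hy
    calc ∑' q : L, {q : L | (q : G × H).1 ∈ A}.indicator (fun q => f (ℓ.2 + (q : G × H).2)) q
        = ∑' q : L, ((fun q : L => (q : G × H).1) ⁻¹' (ℓ.1 +ᵥ A)).indicator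
            (fun q => f (q : G × H).2) q := by
          rw [← (Equiv.addLeft (⟨ℓ, hℓ⟩ : L)).tsum_eq (((fun q : L => (q : G × H).1) ⁻¹'
            (ℓ.1 +ᵥ A)).indicator _)]
          congr 1 with q
          have hmem : ((⟨ℓ, hℓ⟩ + q : L) : G × H).1 ∈ ℓ.1 +ᵥ A ↔ (q : G × H).1 ∈ A :=
            vadd_mem_vadd_set_iff
          classical
          simp only [Set.indicator_apply, mem_preimage, mem_ofPred_eq, Equiv.coe_addLeft, hmem]
          rfl
      _ ≤ C := (Measure.sum_smul_dirac_apply _ _ (hA.const_vadd ℓ.1)).symm.trans_le (hC ℓ.1)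
  | isClosed =>
    refine (lowerSemicontinuous_tsum fun q => Continuous.lowerSemicontinuous ?_).isClosed_preimage C
    classical
    simp only [Set.indicator_apply]
    exact continuous_if_const _ (fun _ => hf.comp (continuous_add_const _))
      fun _ => continuous_const

theorem MeasureTheory.setLIntegral_le_mul_of_subset_iUnion_vadd {H ι : Type*} [AddGroup H]
    [TopologicalSpace H] [ContinuousAdd H] [MeasurableSpace H] [MeasurableAdd H]
    (θ : Measure H) [θ.IsAddLeftInvariant] {f : H → ℝ≥0∞} (hf : Measurable f) {t : ι → H}
    {V : Set H} (hV : IsOpen V) {C : ℝ≥0∞} (hC : ∀ u ∈ V, ∑' i, f (t i + u) ≤ C)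
    {K : Set H} (hK : IsCompact K) (hcover : K ⊆ ⋃ i, t i +ᵥ V) :
    ∫⁻ y in K, f y ∂θ ≤ C * θ V := by
  obtain ⟨F, hF⟩ := hK.elim_finite_subcover (fun i => t i +ᵥ V) (fun i => hV.vadd (t i)) hcover
  have htranslate : ∀ i, ∫⁻ y in t i +ᵥ V, f y ∂θ = ∫⁻ u in V, f (t i + u) ∂θ := fun i => by
    rw [← image_vadd, ← (measurePreserving_vadd (t i) θ).setLIntegral_comp_emb
      (measurableEmbedding_const_vadd _)]
    rfl
  calc ∫⁻ y in K, f y ∂θ ≤ ∫⁻ y in ⋃ i : F, t i +ᵥ V, f y ∂θ := by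
        rw [iUnion_subtype (fun i => i ∈ F) (fun i => t i +ᵥ V)]
        exact lintegral_mono_set hF
    _ ≤ ∑ i ∈ F, ∫⁻ y in t i +ᵥ V, f y ∂θ :=
        (lintegral_iUnion_le _ _).trans_eq (F.tsum_subtype fun i => ∫⁻ y in t i +ᵥ V, f y ∂θ)
    _ = ∫⁻ u in V, ∑ i ∈ F, f (t i + u) ∂θ := by
        simp only [htranslate]
        exact (lintegral_finsetSum _ fun i _ => hf.comp (measurable_const_add _)).symm
    _ ≤ ∫⁻ _ in V, C ∂θ :=
        setLIntegral_mono measurable_const fun u hu => (ENNReal.sum_le_tsum F).trans (hC u hu)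
    _ = C * θ V := setLIntegral_const V C

theorem MeasureTheory.lintegral_le_of_forall_isCompact_setLIntegral_le {X : Type*}
    [TopologicalSpace X] [MeasurableSpace X] (μ : Measure X) {f : X → ℝ≥0∞} (hf : Continuous f)
    (hf₀ : Tendsto f (cocompact X) (𝓝 0)) {M : ℝ≥0∞}
    (hM : ∀ K, IsCompact K → ∫⁻ x in K, f x ∂μ ≤ M) : ∫⁻ x, f x ∂μ ≤ M := by
  set S : ℕ → Set X := fun n => {x | (n : ℝ≥0∞)⁻¹ ≤ f x}
  have hS : ∀ n, IsCompact (S n) := fun n => by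
    obtain ⟨K, hK, hKS⟩ := mem_cocompact.1 <|
      hf₀ (Iio_mem_nhds (ENNReal.inv_pos.2 (ENNReal.natCast_ne_top n)))
    exact hK.of_isClosed_subset (isClosed_le continuous_const hf) fun x hx =>
      not_not.1 fun hxK => (not_lt.2 hx) (show f x < _ from hKS hxK)
  have hsupp : f.support ⊆ ⋃ n, S n := fun x hx =>
    mem_iUnion.2 ((ENNReal.exists_inv_nat_lt hx).imp fun _ => le_of_lt)
  have hmono : Monotone S := fun m n hmn x (hx : _ ≤ _) =>
    (ENNReal.inv_le_inv.2 (Nat.cast_le.2 hmn)).trans hx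
  calc ∫⁻ x, f x ∂μ = ∫⁻ x in ⋃ n, S n, f x ∂μ := (setLIntegral_eq_of_support_subset hsupp).symm
    _ = ⨆ n, ∫⁻ x in S n, f x ∂μ := setLIntegral_iUnion_of_directed f hmono.directed_le
    _ ≤ M := iSup_le fun n => hM _ (hS n)

theorem c0_weight_translationBounded_integrable_general
    {G H : Type*}
    [AddCommGroup G] [TopologicalSpace G] [IsTopologicalAddGroup G] [LocallyCompactSpace G]
    [MeasurableSpace G] [BorelSpace G]
    [AddCommGroup H] [TopologicalSpace H] [IsTopologicalAddGroup H] [LocallyCompactSpace H]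
    [MeasurableSpace H] [BorelSpace H]
    (θH : Measure H) [θH.IsAddHaarMeasure]
    (L : AddSubgroup (G × H)) [CompactSpace ((G × H) ⧸ L)]
    (hdense : Dense (Prod.snd '' (L : Set (G × H))))
    (h : H → ℂ) (hc : Continuous h) (h0 : Tendsto h (cocompact H) (nhds 0))
    -- `ω_h` is translation bounded (via its total variation `|ω_h|`):
    (hTB : ∀ K : Set G, IsCompact K → ∃ C : ℝ≥0∞, C < ⊤ ∧ ∀ s : G,
      (Measure.sum fun q : L =>
        (‖h ((q : G × H).2)‖₊ : ℝ≥0∞) • Measure.dirac (q : G × H).1) (s +ᵥ K) ≤ C) :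
    Integrable h θH := by
  obtain ⟨N, hN, hN₀⟩ := exists_compact_mem_nhds (0 : H)
  obtain ⟨W, hW, hLW⟩ := L.exists_isCompact_forall_exists_fst_mem_snd_vadd_mem hdense
    isOpen_interior ⟨0, mem_interior_iff_mem_nhds.2 hN₀⟩
  obtain ⟨C, hC, hCW⟩ := hTB (closure W) hW.closure
  have hperiodic := L.tsum_indicator_le_of_dense_snd hdense hc.enorm
    isClosed_closure.measurableSet hCW
  have hcompact (K : Set H) (hK : IsCompact K) : ∫⁻ y in K, ‖h y‖ₑ ∂θH ≤ C * θH (interior N) :=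
    setLIntegral_le_mul_of_subset_iUnion_vadd θH hc.enorm.measurable isOpen_interior
      (t := fun q : {q : L | (q : G × H).1 ∈ closure W} => ((q : L) : G × H).2)
      (fun u _ => by simpa only [add_comm] using (tsum_subtype _ _).trans_le (hperiodic u))
      hK fun y _ => by
        obtain ⟨ℓ, hℓ, hℓW, hyℓ⟩ := hLW y
        exact mem_iUnion.2 ⟨⟨⟨ℓ, hℓ⟩, subset_closure hℓW⟩, hyℓ⟩
  have h0' : Tendsto (fun y => ‖h y‖ₑ) (cocompact H) (𝓝 0) := by
    simpa only [enorm_zero] using h0.enorm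
  exact ⟨hc.aestronglyMeasurable,
    (lintegral_le_of_forall_isCompact_setLIntegral_le θH hc.enorm h0' hcompact).trans_lt <|
      ENNReal.mul_lt_top hC ((measure_mono interior_subset).trans_lt hN.measure_lt_top)⟩

/-- In a cut-and-project scheme `(G, H, ℒ)` with `G` σ-compact, if
`h ∈ C₀(H)` is such that `ω_h = ∑_{(x,y) ∈ ℒ} h(y) δ_x` is a translation bounded
measure on `G`, then `h ∈ L¹(H)`. -/
theorem c0_weight_translationBounded_integrable
    {G H : Type*}
    [AddCommGroup G] [TopologicalSpace G] [IsTopologicalAddGroup G] [LocallyCompactSpace G]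
    [SigmaCompactSpace G] [MeasurableSpace G] [BorelSpace G]
    [AddCommGroup H] [TopologicalSpace H] [IsTopologicalAddGroup H] [LocallyCompactSpace H]
    [MeasurableSpace H] [BorelSpace H]
    (θH : Measure H) [θH.IsAddHaarMeasure]
    (L : AddSubgroup (G × H)) [DiscreteTopology L] [CompactSpace ((G × H) ⧸ L)]
    (hinj : Set.InjOn Prod.fst (L : Set (G × H)))
    (hdense : Dense (Prod.snd '' (L : Set (G × H))))
    (h : H → ℂ) (hc : Continuous h) (h0 : Tendsto h (cocompact H) (nhds 0))
    -- `ω_h` is translation bounded (via its total variation `|ω_h|`):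
    (hTB : ∀ K : Set G, IsCompact K → ∃ C : ℝ≥0∞, C < ⊤ ∧ ∀ s : G,
      (Measure.sum fun q : L =>
        (‖h ((q : G × H).2)‖₊ : ℝ≥0∞) • Measure.dirac (q : G × H).1) (s +ᵥ K) ≤ C) :
    Integrable h θH :=
  c0_weight_translationBounded_integrable_general θH L hdense h hc h0 hTB
end
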